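/- arXiv:math/0312104 — 4 statements merged into one kernel-verified Lean document; each statement's English description precedes it below -/
import Mathlib

section
/- For Re z > 0, the Laplace transform of b(t) = e^{-t}(ψ(e^t) - ⌊e^t⌋) equals g(z) = (1/(z+1)) Σ_{n=1}^∞ (Λ(n) - 1)/n^{z+1} = (1/(z+1)) ( -ζ'(z+1)/ζ(z+1) - ζ(z+1) ). -/
open MeasureTheory Complex Set Finset

noncomputable def chebyshevPsi (v : ℝ) : ℝ :=
  ∑ n ∈ Finset.Iic ⌊v⌋₊, ArithmeticFunction.vonMangoldt n

open Filter Topology ArithmeticFunction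

lemma aux_cexp_integrableOn (w : ℂ) (hw : 0 < w.re) (a : ℝ) :
    IntegrableOn (fun t : ℝ => Complex.exp (-w * t)) (Ici a) := by
  rw [integrableOn_Ici_iff_integrableOn_Ioi]
  apply Integrable.mono' (exp_neg_integrableOn_Ioi a hw)
  · exact (Complex.continuous_exp.comp (continuous_const.mul Complex.continuous_ofReal)).aestronglyMeasurable
  · filter_upwards with t
    simp [Complex.norm_exp]

lemma aux_cexp_integral (w : ℂ) (hw : 0 < w.re) (a : ℝ) :
    ∫ t in Ioi a, Complex.exp (-w * t) = Complex.exp (-w * a) / w := by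
  have hw0 : w ≠ 0 := fun h => by simp [h] at hw
  have hderiv : ∀ x ∈ Ioi a, HasDerivAt (fun t : ℝ => -(w⁻¹) * Complex.exp (-w * t))
      (Complex.exp (-w * x)) x := by
    intro x _
    have h1 : HasDerivAt (fun t : ℝ => -w * (t : ℂ)) (-w) x := by
      simpa using (Complex.ofRealCLM.hasDerivAt (x := x)).const_mul (-w)
    have h2 := (h1.cexp).const_mul (-(w⁻¹))
    refine h2.congr_deriv ?_
    linear_combination (Complex.exp (-w * x)) * mul_inv_cancel₀ hw0
  have hint : IntegrableOn (fun t : ℝ => Complex.exp (-w * t)) (Ioi a) :=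
    (aux_cexp_integrableOn w hw a).mono_set Ioi_subset_Ici_self
  have htend : Tendsto (fun t : ℝ => -(w⁻¹) * Complex.exp (-w * t)) atTop (𝓝 (0:ℂ)) := by
    refine squeeze_zero_norm (a := fun t => ‖w⁻¹‖ * Real.exp (-w.re * t)) (fun t => ?_) ?_
    · simp [Complex.norm_exp]
    · have h1 : Tendsto (fun t : ℝ => -w.re * t) atTop atBot :=
        Tendsto.const_mul_atTop_of_neg (by linarith) tendsto_id
      have := (Real.tendsto_exp_atBot.comp h1).const_mul ‖w⁻¹‖
      simpa [mul_comm] using this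
  have hcont : ContinuousWithinAt (fun t : ℝ => -(w⁻¹) * Complex.exp (-w * t)) (Ici a) a :=
    (continuous_const.mul (Complex.continuous_exp.comp (continuous_const.mul Complex.continuous_ofReal))).continuousWithinAt
  have := integral_Ioi_of_hasDerivAt_of_tendsto hcont hderiv hint htend
  rw [this]
  field_simp
  ring

lemma aux_rexp_integral {c : ℝ} (hc : 0 < c) (a : ℝ) :
    ∫ t in Ioi a, Real.exp (-c * t) = Real.exp (-c * a) / c := by
  have h := aux_cexp_integral (c : ℂ) (by simpa using hc) a
  have h2 : ∫ t in Ioi a, ((Real.exp (-c * t) : ℝ) : ℂ)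
      = ((∫ t in Ioi a, Real.exp (-c * t) : ℝ) : ℂ) := integral_ofReal
  have h3 : ∫ t in Ioi a, ((Real.exp (-c * t) : ℝ) : ℂ)
      = ∫ t in Ioi a, Complex.exp (-(c:ℂ) * t) := by
    apply setIntegral_congr_fun measurableSet_Ioi
    intro t _
    simp only [Complex.ofReal_exp]
    norm_cast
  apply Complex.ofReal_injective
  rw [← h2, h3, h, Complex.ofReal_div, Complex.ofReal_exp]
  norm_cast

lemma aux_indicator_integral {E : Type*} [NormedAddCommGroup E] [NormedSpace ℝ E]
    (f : ℝ → E) {a : ℝ} (ha : 0 ≤ a) :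
    ∫ t in Ioi (0:ℝ), (Ici a).indicator f t = ∫ t in Ioi a, f t := by
  have h1 : (Ici a).indicator f =ᵐ[volume] (Ioi a).indicator f :=
    indicator_ae_eq_of_ae_eq_set Ioi_ae_eq_Ici.symm
  rw [integral_congr_ae (ae_restrict_of_ae h1), integral_indicator measurableSet_Ioi,
    Measure.restrict_restrict measurableSet_Ioi, Ioi_inter_Ioi, max_eq_left ha]

/-- For `Re z > 0`, the Laplace transform of `b(t) = e^{-t}(ψ(e^t) - ⌊e^t⌋)`
equals `(1/(z+1)) Σ_{n≥1} (Λ(n)-1)/n^{z+1} = (1/(z+1))(-ζ'(z+1)/ζ(z+1) - ζ(z+1))`. -/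
theorem stmt_8 (z : ℂ) (hz : 0 < z.re) :
    (∫ t in Ioi (0 : ℝ),
        ((Real.exp (-t) * (chebyshevPsi (Real.exp t) - (⌊Real.exp t⌋ : ℝ)) : ℝ) : ℂ) *
          Complex.exp (-z * t)) =
      (1 / (z + 1)) *
        ∑' n : ℕ, ((ArithmeticFunction.vonMangoldt (n + 1) : ℂ) - 1) /
          ((n + 1 : ℕ) : ℂ) ^ (z + 1) ∧
    (1 / (z + 1)) *
        (∑' n : ℕ, ((ArithmeticFunction.vonMangoldt (n + 1) : ℂ) - 1) /
          ((n + 1 : ℕ) : ℂ) ^ (z + 1)) =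
      (1 / (z + 1)) *
        (-(deriv riemannZeta (z + 1)) / riemannZeta (z + 1) - riemannZeta (z + 1)) := by
  have h1 : 1 < (z + 1).re := by simp only [Complex.add_re, Complex.one_re]; linarith
  have hwre : (0:ℝ) < (z + 1).re := by linarith
  have hw0 : z + 1 ≠ 0 := by
    intro h; rw [h] at hwre; simp at hwre
  -- summability facts
  have hΛsum : Summable (fun n : ℕ => ‖LSeries.term (fun m => ((Λ m : ℝ) : ℂ)) (z+1) n‖) :=
    summable_norm_iff.mpr (ArithmeticFunction.LSeriesSummable_vonMangoldt h1)
  have hΛterm : ∀ n : ℕ, LSeries.term (fun m => ((Λ m : ℝ) : ℂ)) (z+1) (n+1)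
      = ((Λ (n+1) : ℝ) : ℂ) / ((n+1 : ℕ) : ℂ) ^ (z+1) := fun n =>
    LSeries.term_of_ne_zero (Nat.succ_ne_zero n) _ _
  have hΛsum' : Summable (fun n : ℕ => ((Λ (n+1) : ℝ) : ℂ) / ((n+1 : ℕ) : ℂ) ^ (z+1)) := by
    have := (summable_norm_iff.mp hΛsum).comp_injective (Nat.succ_injective)
    exact this.congr fun n => hΛterm n
  have hζsum : Summable (fun n : ℕ => 1 / ((n+1 : ℕ) : ℂ) ^ (z+1)) := by
    have := (Complex.summable_one_div_nat_cpow.mpr h1).comp_injective (Nat.succ_injective)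
    exact this.congr fun n => by simp [Function.comp]
  constructor
  · set c : ℕ → ℂ := fun n => ((Λ (n+1) : ℝ) : ℂ) - 1 with hc
    set F : ℕ → ℝ → ℂ := fun n t =>
      (Ici (Real.log ((n:ℝ)+1))).indicator (fun s => c n * Complex.exp (-(z+1) * s)) t with hFdef
    have hlog : ∀ n : ℕ, 0 ≤ Real.log ((n:ℝ)+1) := fun n =>
      Real.log_nonneg (by have := Nat.cast_nonneg (α := ℝ) n; linarith)
    have hkey : ∀ t ∈ Ioi (0:ℝ),
        ((Real.exp (-t) * (chebyshevPsi (Real.exp t) - (⌊Real.exp t⌋ : ℝ)) : ℝ) : ℂ) *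
          Complex.exp (-z * t) = ∑' n, F n t := by
      intro t ht
      rw [Set.mem_Ioi] at ht
      have hexp1 : (1:ℝ) ≤ Real.exp t := Real.one_le_exp (le_of_lt ht)
      set N := ⌊Real.exp t⌋₊ with hN
      have hmem : ∀ n : ℕ, t ∈ Ici (Real.log ((n:ℝ)+1)) ↔ n < N := by
        intro n
        rw [Set.mem_Ici, Real.log_le_iff_le_exp (by positivity)]
        constructor
        · intro h
          have h2 : ((n+1:ℕ):ℝ) ≤ Real.exp t := by push_cast; linarith
          have := Nat.le_floor h2
          omega
        · intro h
          have h2 : ((n+1:ℕ):ℝ) ≤ (N:ℝ) := by exact_mod_cast h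
          have h3 : (N:ℝ) ≤ Real.exp t := Nat.floor_le (by positivity)
          push_cast at h2 ⊢
          linarith
      have hzero : ∀ n ∉ Finset.range N, F n t = 0 := by
        intro n hn
        rw [Finset.mem_range] at hn
        exact indicator_of_notMem (fun h => hn ((hmem n).mp h)) _
      have htsum : ∑' n, F n t = (∑ n ∈ Finset.range N, c n) * Complex.exp (-(z+1) * t) := by
        rw [tsum_eq_sum hzero,
          Finset.sum_congr rfl (fun n hn =>
            indicator_of_mem ((hmem n).mpr (Finset.mem_range.mp hn))
              (fun s => c n * Complex.exp (-(z+1) * s))),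
          ← Finset.sum_mul]
      have hψ : chebyshevPsi (Real.exp t) = ∑ n ∈ Finset.range N, Λ (n+1) := by
        unfold chebyshevPsi
        have hIic : Finset.Iic N = Finset.range (N+1) := by
          ext k; simp [Nat.lt_succ_iff]
        rw [← hN, hIic, Finset.sum_range_succ']
        simp
      have hfl2 : (((⌊Real.exp t⌋ : ℝ)) : ℂ) = (N : ℂ) := by
        have : ((⌊Real.exp t⌋ : ℤ) : ℝ) = (N : ℝ) := by
          rw [← Int.natCast_floor_eq_floor (Real.exp_pos t).le, hN]
          push_cast; ring
        rw [this]; norm_cast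
      have hsum_c : ∑ n ∈ Finset.range N, c n
          = ((chebyshevPsi (Real.exp t) : ℝ) : ℂ) - (N:ℂ) := by
        simp only [hc, Finset.sum_sub_distrib, Finset.sum_const, Finset.card_range,
          nsmul_eq_mul, mul_one]
        congr 1
        rw [hψ]; push_cast; ring
      rw [htsum, hsum_c, Complex.ofReal_mul, Complex.ofReal_sub, hfl2, Complex.ofReal_exp]
      rw [show Complex.exp (((-t : ℝ)) : ℂ) * ((((chebyshevPsi (Real.exp t) : ℝ)) : ℂ) - (N:ℂ)) *
            Complex.exp (-z * t)
          = ((((chebyshevPsi (Real.exp t) : ℝ)) : ℂ) - (N:ℂ)) *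
            (Complex.exp (((-t : ℝ)) : ℂ) * Complex.exp (-z * t)) from by ring,
        ← Complex.exp_add]
      congr 2
      push_cast; ring
    have hFintg : ∀ n : ℕ, Integrable (F n) (volume.restrict (Ioi 0)) := by
      intro n
      rw [hFdef]
      rw [integrable_indicator_iff measurableSet_Ici]
      have hbase : IntegrableOn (fun s : ℝ => c n * Complex.exp (-(z+1) * s))
          (Ici (Real.log ((n:ℝ)+1))) volume :=
        ((aux_cexp_integrableOn (z+1) hwre _).const_mul _)
      unfold IntegrableOn
      rw [Measure.restrict_restrict measurableSet_Ici]
      exact hbase.mono_set inter_subset_left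
    have hFint : ∀ n : ℕ, ∫ t in Ioi (0:ℝ), F n t
        = (1/(z+1)) * ((((Λ (n+1) : ℝ) : ℂ) - 1) / ((n+1 : ℕ) : ℂ) ^ (z+1)) := by
      intro n
      rw [hFdef]
      rw [aux_indicator_integral _ (hlog n), MeasureTheory.integral_const_mul, aux_cexp_integral _ hwre]
      have hpow : ((n+1 : ℕ) : ℂ) ^ ((z+1) : ℂ)
          = Complex.exp ((z+1) * ((Real.log ((n:ℝ)+1) : ℝ) : ℂ)) := by
        rw [Complex.cpow_def_of_ne_zero (Nat.cast_ne_zero.mpr (Nat.succ_ne_zero n))]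
        rw [mul_comm]
        congr 2
        rw [show ((n+1:ℕ):ℂ) = ((((n:ℝ)+1) : ℝ):ℂ) from by push_cast; ring]
        rw [← Complex.ofReal_log (by positivity)]
      rw [hpow, show -(z+1) * ((Real.log ((n:ℝ)+1) : ℝ) : ℂ)
          = -((z+1) * ((Real.log ((n:ℝ)+1) : ℝ) : ℂ)) from by ring, Complex.exp_neg, hc]
      ring
    have hFnorm : ∀ n : ℕ, ∫ t in Ioi (0:ℝ), ‖F n t‖
        = ‖c n‖ * (Real.exp (-(z+1).re * Real.log ((n:ℝ)+1)) / (z+1).re) := by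
      intro n
      have heq : ∀ t : ℝ, ‖F n t‖ = (Ici (Real.log ((n:ℝ)+1))).indicator
          (fun s => ‖c n‖ * Real.exp (-(z+1).re * s)) t := by
        intro t
        rw [hFdef, norm_indicator_eq_indicator_norm]
        congr 1
        funext s
        rw [norm_mul]
        congr 1
        rw [Complex.norm_exp]
        congr 1
        simp [Complex.mul_re]
      simp_rw [heq]
      rw [aux_indicator_integral _ (hlog n), MeasureTheory.integral_const_mul, aux_rexp_integral hwre]
    have hsum : Summable (fun n : ℕ => ∫ t in Ioi (0:ℝ), ‖F n t‖) := by
      have hb : ∀ n : ℕ, ∫ t in Ioi (0:ℝ), ‖F n t‖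
          ≤ ((Λ (n+1) + 1) / ((n+1:ℕ):ℝ) ^ (z+1).re) * ((z+1).re)⁻¹ := by
        intro n
        rw [hFnorm n]
        have hrp : Real.exp (-(z+1).re * Real.log ((n:ℝ)+1)) = (((n+1:ℕ):ℝ) ^ (z+1).re)⁻¹ := by
          rw [← Real.rpow_neg (by positivity), Real.rpow_def_of_pos (by positivity), mul_comm]
          push_cast; ring_nf
        rw [hrp]
        have hc' : ‖c n‖ ≤ Λ (n+1) + 1 := by
          rw [hc]
          calc ‖((Λ (n+1):ℝ):ℂ) - 1‖ ≤ ‖((Λ (n+1):ℝ):ℂ)‖ + ‖(1:ℂ)‖ := norm_sub_le _ _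
            _ = Λ (n+1) + 1 := by
              rw [Complex.norm_real, norm_one, Real.norm_eq_abs,
                _root_.abs_of_nonneg vonMangoldt_nonneg]
        rw [show ‖c n‖ * ((((n+1:ℕ):ℝ) ^ (z+1).re)⁻¹ / (z+1).re)
            = ‖c n‖ * (((n+1:ℕ):ℝ) ^ (z+1).re)⁻¹ * ((z+1).re)⁻¹ from by ring,
          div_eq_mul_inv]
        gcongr
      have hS1 : Summable (fun n : ℕ => Λ (n+1) / ((n+1:ℕ):ℝ) ^ (z+1).re) := by
        have h := hΛsum.comp_injective Nat.succ_injective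
        apply h.congr
        intro n
        simp only [Function.comp_apply, LSeries.norm_term_eq]
        rw [if_neg (Nat.succ_ne_zero n), Complex.norm_real, Real.norm_eq_abs,
          _root_.abs_of_nonneg vonMangoldt_nonneg]
      have hS2 : Summable (fun n : ℕ => 1 / ((n+1:ℕ):ℝ) ^ (z+1).re) := by
        have h := (Real.summable_one_div_nat_rpow.mpr h1).comp_injective Nat.succ_injective
        exact h.congr fun n => by simp [Function.comp]
      have hmaj : Summable (fun n : ℕ =>
          ((Λ (n+1) + 1) / ((n+1:ℕ):ℝ) ^ (z+1).re) * ((z+1).re)⁻¹) := by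
        apply Summable.mul_right
        exact (hS1.add hS2).congr fun n => by rw [← add_div]
      exact Summable.of_nonneg_of_le
        (fun n => integral_nonneg fun t => norm_nonneg _) hb hmaj
    rw [setIntegral_congr_fun measurableSet_Ioi hkey]
    rw [← integral_tsum_of_summable_integral_norm hFintg hsum]
    exact (tsum_congr hFint).trans tsum_mul_left
  · -- second conjunct
    congr 1
    have hsplit : ∀ n : ℕ, ((Λ (n+1) : ℝ) : ℂ) / ((n+1 : ℕ) : ℂ) ^ (z+1)
        - 1 / ((n+1 : ℕ) : ℂ) ^ (z+1)
        = ((Λ (n + 1) : ℝ) - 1 : ℂ) / ((n + 1 : ℕ) : ℂ) ^ (z + 1) := fun n =>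
      (sub_div _ _ _).symm
    rw [← tsum_congr hsplit, Summable.tsum_sub hΛsum' hζsum]
    have hzeta : ∑' n : ℕ, 1 / ((n+1 : ℕ) : ℂ) ^ (z+1) = riemannZeta (z+1) := by
      rw [zeta_eq_tsum_one_div_nat_add_one_cpow h1]
      exact tsum_congr fun n => by push_cast; ring_nf
    have hvm : ∑' n : ℕ, ((Λ (n+1) : ℝ) : ℂ) / ((n+1 : ℕ) : ℂ) ^ (z+1)
        = - deriv riemannZeta (z+1) / riemannZeta (z+1) := by
      rw [← LSeries_vonMangoldt_eq_deriv_riemannZeta_div h1]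
      rw [LSeries]
      rw [Summable.tsum_eq_zero_add (ArithmeticFunction.LSeriesSummable_vonMangoldt h1)]
      simp only [LSeries.term_zero, zero_add]
      exact (tsum_congr fun n => (hΛterm n)).symm
    rw [hzeta, hvm]
end

section
/- The function g(z) = (1/(z+1))(-ζ'(z+1)/ζ(z+1) - ζ(z+1)), a priori analytic for Re z > 0, extends analytically to a neighborhood of every point of the imaginary axis {Re z = 0}. -/
open Complex Set Filter Topology

/-- The entire function `(s-1) ζ(s)`, with the removable singularity at `1` filled in. -/
noncomputable def Zee : ℂ → ℂ := Function.update (fun s => (s - 1) * riemannZeta s) 1 1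

lemma Zee_eq {s : ℂ} (h : s ≠ 1) : Zee s = (s - 1) * riemannZeta s :=
  Function.update_of_ne h _ _

lemma Zee_one : Zee 1 = 1 := Function.update_self _ _ _

lemma Zee_continuousAt_one : ContinuousAt Zee 1 := by
  have h1 : Tendsto Zee (𝓝[≠] 1) (𝓝 1) := by
    refine riemannZeta_residue_one.congr' ?_
    filter_upwards [self_mem_nhdsWithin] with s hs
    exact (Zee_eq hs).symm
  have h2 : Tendsto Zee (pure 1) (𝓝 1) := by simpa [Zee_one] using tendsto_pure_nhds Zee 1
  rw [ContinuousAt, Zee_one]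
  exact (h1.sup h2).mono_left (nhdsNE_sup_pure 1).ge

lemma Zee_differentiable : Differentiable ℂ Zee := by
  rw [← differentiableOn_univ,
    ← differentiableOn_compl_singleton_and_continuousAt_iff (c := 1) univ_mem]
  refine ⟨?_, Zee_continuousAt_one⟩
  have hopen : IsOpen ((univ : Set ℂ) \ {1}) := isOpen_univ.sdiff isClosed_singleton
  intro s hs
  have hs1 : s ≠ 1 := hs.2
  have hd : DifferentiableAt ℂ (fun s : ℂ => (s - 1) * riemannZeta s) s :=
    ((differentiableAt_id.sub_const 1).mul (differentiableAt_riemannZeta hs1))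
  refine (hd.congr_of_eventuallyEq ?_).differentiableWithinAt
  filter_upwards [isOpen_ne.mem_nhds hs1] with w hw using Zee_eq hw

lemma Zee_ne_zero {s : ℂ} (h : 1 ≤ s.re) : Zee s ≠ 0 := by
  rcases eq_or_ne s 1 with rfl | hs
  · rw [Zee_one]; exact one_ne_zero
  · rw [Zee_eq hs]
    exact mul_ne_zero (sub_ne_zero.mpr hs) (riemannZeta_ne_zero_of_one_le_re h)

lemma Zee_deriv_continuous : Continuous (deriv Zee) := by
  have h : AnalyticOnNhd ℂ Zee univ :=
    Zee_differentiable.differentiableOn.analyticOnNhd isOpen_univ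
  exact continuous_iff_continuousAt.mpr fun s => (h.deriv s trivial).continuousAt

/-- The function `-Z'/Z - (Z-1)/(s-1)`, i.e. `-ζ'/ζ - ζ` with singularity at 1 removed. -/
noncomputable def Eff : ℂ → ℂ :=
  Function.update (fun s => -deriv Zee s / Zee s - (Zee s - 1) / (s - 1)) 1
    (-deriv Zee 1 / Zee 1 - deriv Zee 1)

lemma Eff_eq {s : ℂ} (h : s ≠ 1) :
    Eff s = -deriv Zee s / Zee s - (Zee s - 1) / (s - 1) :=
  Function.update_of_ne h _ _

lemma Eff_continuousAt_one : ContinuousAt Eff 1 := by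
  have hZ1 : Zee 1 ≠ 0 := by rw [Zee_one]; exact one_ne_zero
  have hA : Tendsto (fun s => -deriv Zee s / Zee s) (𝓝 1) (𝓝 (-deriv Zee 1 / Zee 1)) :=
    (Zee_deriv_continuous.continuousAt.neg.div Zee_differentiable.continuous.continuousAt hZ1)
  have hB : Tendsto (fun s => (Zee s - 1) / (s - 1)) (𝓝[≠] 1) (𝓝 (deriv Zee 1)) := by
    have := (hasDerivAt_iff_tendsto_slope.mp (Zee_differentiable 1).hasDerivAt)
    refine this.congr' ?_
    filter_upwards [self_mem_nhdsWithin] with s _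
    rw [slope_def_field, Zee_one]
  have h1 : Tendsto Eff (𝓝[≠] 1) (𝓝 (Eff 1)) := by
    have : Tendsto (fun s => -deriv Zee s / Zee s - (Zee s - 1) / (s - 1)) (𝓝[≠] 1)
        (𝓝 (-deriv Zee 1 / Zee 1 - deriv Zee 1)) :=
      (hA.mono_left nhdsWithin_le_nhds).sub hB
    rw [show Eff 1 = -deriv Zee 1 / Zee 1 - deriv Zee 1 from Function.update_self _ _ _]
    refine this.congr' ?_
    filter_upwards [self_mem_nhdsWithin] with s hs
    exact (Eff_eq hs).symm
  have h2 : Tendsto Eff (pure 1) (𝓝 (Eff 1)) := tendsto_pure_nhds Eff 1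
  exact (h1.sup h2).mono_left (nhdsNE_sup_pure 1).ge

lemma isOpen_Zee_ne : IsOpen {s : ℂ | Zee s ≠ 0} :=
  isOpen_compl_singleton.preimage Zee_differentiable.continuous

lemma Eff_differentiableOn : DifferentiableOn ℂ Eff {s : ℂ | Zee s ≠ 0} := by
  have h1mem : {s : ℂ | Zee s ≠ 0} ∈ 𝓝 1 :=
    isOpen_Zee_ne.mem_nhds (by simp [Zee_one])
  refine (differentiableOn_compl_singleton_and_continuousAt_iff h1mem).mp
    ⟨?_, Eff_continuousAt_one⟩
  refine DifferentiableOn.congr (f := fun s => -deriv Zee s / Zee s - (Zee s - 1) / (s - 1))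
    ?_ (fun s hs => Eff_eq hs.2)
  intro s hs
  have hder : DifferentiableAt ℂ (deriv Zee) s := by
    have hA : AnalyticOnNhd ℂ Zee univ :=
      Zee_differentiable.differentiableOn.analyticOnNhd isOpen_univ
    exact (hA.deriv s trivial).differentiableAt
  exact (((hder.neg.div (Zee_differentiable s) hs.1)).sub
    (((Zee_differentiable s).sub_const 1).div (differentiableAt_id.sub_const 1)
      (sub_ne_zero.mpr hs.2))).differentiableWithinAt

/-- The function `g(z) = (1/(z+1))(-ζ'(z+1)/ζ(z+1) - ζ(z+1))`, analytic for
`Re z > 0`, extends analytically to a neighborhood of every point of the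
imaginary axis. -/
theorem stmt_10 :
    ∃ (U : Set ℂ) (G : ℂ → ℂ), IsOpen U ∧ {z : ℂ | z.re = 0} ⊆ U ∧
      DifferentiableOn ℂ G (U ∪ {z : ℂ | 0 < z.re}) ∧
      ∀ z : ℂ, 0 < z.re →
        G z = (1 / (z + 1)) *
          (-(deriv riemannZeta (z + 1)) / riemannZeta (z + 1) - riemannZeta (z + 1)) := by
  refine ⟨{z : ℂ | Zee (z + 1) ≠ 0 ∧ z + 1 ≠ 0}, fun z => (1 / (z + 1)) * Eff (z + 1), ?_, ?_, ?_, ?_⟩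
  · have : {z : ℂ | Zee (z + 1) ≠ 0 ∧ z + 1 ≠ 0}
        = (fun z : ℂ => z + 1) ⁻¹' ({s | Zee s ≠ 0} ∩ {(0 : ℂ)}ᶜ) := by
      ext z
      simp only [mem_preimage, mem_inter_iff, mem_compl_iff, mem_singleton_iff, mem_setOf_eq]
    rw [this]
    exact (isOpen_Zee_ne.inter isOpen_compl_singleton).preimage (by fun_prop)
  · intro z hz
    have hre : (1 : ℝ) ≤ (z + 1).re := by
      simp only [add_re, one_re]
      rw [mem_setOf_eq] at hz
      simp [hz]
    refine ⟨Zee_ne_zero hre, fun h => ?_⟩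
    rw [h] at hre
    norm_num at hre
  · have hsub : {z : ℂ | 0 < z.re} ⊆ {z : ℂ | Zee (z + 1) ≠ 0 ∧ z + 1 ≠ 0} := by
      intro z hz
      have hre : (1 : ℝ) ≤ (z + 1).re := by
        simp only [add_re, one_re]; linarith [mem_setOf_eq ▸ hz]
      refine ⟨Zee_ne_zero hre, fun h => ?_⟩
      rw [h] at hre; norm_num at hre
    rw [union_eq_self_of_subset_right hsub]
    intro z hz
    have h1 : DifferentiableAt ℂ (fun z : ℂ => 1 / (z + 1)) z :=
      (differentiableAt_const 1).div (differentiableAt_id.add_const 1) hz.2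
    have h2 : DifferentiableAt ℂ (fun z : ℂ => Eff (z + 1)) z := by
      have hE : DifferentiableAt ℂ Eff (z + 1) :=
        Eff_differentiableOn.differentiableAt (isOpen_Zee_ne.mem_nhds hz.1)
      exact hE.comp z (differentiableAt_id.add_const 1)
    exact (h1.mul h2).differentiableWithinAt
  · intro z hz
    show 1 / (z + 1) * Eff (z + 1) = _
    set w := z + 1 with hw
    have hwre : 1 < w.re := by simp only [hw, add_re, one_re]; linarith
    have hw1 : w ≠ 1 := by
      intro h; rw [h] at hwre; simp at hwre
    have hζ : riemannZeta w ≠ 0 := riemannZeta_ne_zero_of_one_lt_re hwre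
    have hw1' : w - 1 ≠ 0 := sub_ne_zero.mpr hw1
    have hderiv : deriv Zee w = riemannZeta w + (w - 1) * deriv riemannZeta w := by
      have heq : Zee =ᶠ[𝓝 w] fun s => (s - 1) * riemannZeta s := by
        filter_upwards [isOpen_ne.mem_nhds hw1] with s hs using Zee_eq hs
      rw [heq.deriv_eq]
      have hD : HasDerivAt (fun s : ℂ => (s - 1) * riemannZeta s)
          (1 * riemannZeta w + (w - 1) * deriv riemannZeta w) w :=
        ((hasDerivAt_id w).sub_const 1).mul (differentiableAt_riemannZeta hw1).hasDerivAt
      rw [hD.deriv]; ring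
    rw [Eff_eq hw1, hderiv, Zee_eq hw1]
    congr 1
    field_simp
    ring
end

section
/- If the improper integral ∫₁^{∞} (ψ(v) - v)/v² dv converges (as a limit of ∫₁^T as T → ∞), then ψ(v) ~ v as v → ∞, where ψ is Chebyshev's (nondecreasing) function. -/
open Filter Finset

lemma psi_mono : Monotone chebyshevPsi := by
  intro a b hab
  apply Finset.sum_le_sum_of_subset_of_nonneg
  · exact Finset.Iic_subset_Iic.2 (Nat.floor_mono hab)
  · intro i _ _; exact ArithmeticFunction.vonMangoldt_nonneg

lemma integrand_ii {a b : ℝ} (ha : 0 < a) (hb : 0 < b) :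
    IntervalIntegrable (fun t => (chebyshevPsi t - t) / t ^ 2) MeasureTheory.volume a b := by
  have h1 : IntervalIntegrable (fun t => chebyshevPsi t - t) MeasureTheory.volume a b := by
    apply IntervalIntegrable.sub
    · exact (psi_mono.monotoneOn _).intervalIntegrable
    · exact continuous_id.intervalIntegrable _ _
  have h2 : ContinuousOn (fun t : ℝ => (t ^ 2)⁻¹) (Set.uIcc a b) := by
    apply ContinuousOn.inv₀ (by fun_prop)
    intro t ht
    have h0 : 0 < t := lt_of_lt_of_le (lt_min ha hb) ht.1
    positivity
  simpa [div_eq_mul_inv] using h1.mul_continuousOn h2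
lemma integral_aux {c v : ℝ} (hv : 0 < v) (hc : 0 < c) :
    ∫ t in v..(c*v), (c*v - t) / t ^ 2 = c - 1 - Real.log c := by
  have hpos : ∀ t ∈ Set.uIcc v (c*v), 0 < t := fun t ht =>
    lt_of_lt_of_le (lt_min hv (by positivity)) ht.1
  have key : ∫ t in v..(c*v), (c*v - t) / t ^ 2
      = (-(c*v) * (c*v)⁻¹ - Real.log (c*v)) - (-(c*v) * v⁻¹ - Real.log v) := by
    apply intervalIntegral.integral_eq_sub_of_hasDerivAt (f := fun x : ℝ => -(c*v) * x⁻¹ - Real.log x)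
    · intro t ht
      have ht0 : t ≠ 0 := (hpos t ht).ne'
      have h1 : HasDerivAt (fun x : ℝ => -(c*v) * x⁻¹ - Real.log x)
          (-(c*v) * (-(t^2)⁻¹) - t⁻¹) t :=
        ((hasDerivAt_inv ht0).const_mul (-(c*v))).sub (Real.hasDerivAt_log ht0)
      convert h1 using 1
      · rfl
      · rfl
      · field_simp
    · apply ContinuousOn.intervalIntegrable
      apply ContinuousOn.div (by fun_prop) (by fun_prop)
      intro t ht
      have := hpos t ht
      positivity
  rw [key, Real.log_mul hc.ne' hv.ne']
  have : (c*v) * (c*v)⁻¹ = 1 := mul_inv_cancel₀ (by positivity)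
  have h2 : (c*v) * v⁻¹ = c := by field_simp
  nlinarith [this, h2]

lemma upper_est {c v : ℝ} (hc : 1 < c) (hv : 1 ≤ v) (h : c * v ≤ chebyshevPsi v) :
    c - 1 - Real.log c ≤ ∫ t in v..(c*v), (chebyshevPsi t - t) / t ^ 2 := by
  have hv0 : 0 < v := by linarith
  have hc0 : 0 < c := by linarith
  have hle : v ≤ c * v := by nlinarith
  rw [← integral_aux hv0 hc0]
  apply intervalIntegral.integral_mono_on hle
  · apply ContinuousOn.intervalIntegrable
    apply ContinuousOn.div (by fun_prop) (by fun_prop)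
    intro t ht
    rw [Set.uIcc_of_le hle] at ht
    have : 0 < t := lt_of_lt_of_le hv0 ht.1
    positivity
  · exact integrand_ii hv0 (by positivity)
  · intro t ht
    have ht0 : 0 < t := lt_of_lt_of_le hv0 ht.1
    have : c * v ≤ chebyshevPsi t := h.trans (psi_mono ht.1)
    have h2 : (0:ℝ) < t ^ 2 := by positivity
    exact div_le_div_of_nonneg_right (by linarith) h2.le |>.trans_eq rfl

lemma lower_est {c v : ℝ} (hc0 : 0 < c) (hc : c < 1) (hv : 1 ≤ v)
    (h : chebyshevPsi v ≤ c * v) :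
    c - 1 - Real.log c ≤ ∫ t in v..(c*v), (chebyshevPsi t - t) / t ^ 2 := by
  have hv0 : 0 < v := by linarith
  have hle : c * v ≤ v := by nlinarith
  have hcv0 : 0 < c * v := by positivity
  have hflip : ∫ t in v..(c*v), (chebyshevPsi t - t) / t ^ 2
      = -∫ t in (c*v)..v, (chebyshevPsi t - t) / t ^ 2 :=
    (intervalIntegral.integral_symm _ _)
  have hmono : ∫ t in (c*v)..v, (chebyshevPsi t - t) / t ^ 2
      ≤ ∫ t in (c*v)..v, (c*v - t) / t ^ 2 := by
    apply intervalIntegral.integral_mono_on hle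
    · exact integrand_ii hcv0 hv0
    · apply ContinuousOn.intervalIntegrable
      apply ContinuousOn.div (by fun_prop) (by fun_prop)
      intro t ht
      rw [Set.uIcc_of_le hle] at ht
      have : 0 < t := lt_of_lt_of_le hcv0 ht.1
      positivity
    · intro t ht
      have ht0 : 0 < t := lt_of_lt_of_le hcv0 ht.1
      have : chebyshevPsi t ≤ c * v := (psi_mono ht.2).trans h
      have h2 : (0:ℝ) < t ^ 2 := by positivity
      exact div_le_div_of_nonneg_right (by linarith) h2.le
  have hval : ∫ t in (c*v)..v, (c*v - t) / t ^ 2 = -(c - 1 - Real.log c) := by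
    rw [intervalIntegral.integral_symm, integral_aux hv0 hc0]
  rw [hflip]
  rw [hval] at hmono
  linarith

lemma window {c : ℝ} (hc : 0 < c)
    (hconv : ∃ L : ℝ, Tendsto
      (fun T : ℝ => ∫ v in (1 : ℝ)..T, (chebyshevPsi v - v) / v ^ 2)
      atTop (nhds L)) :
    Tendsto (fun v : ℝ => ∫ t in v..(c*v), (chebyshevPsi t - t) / t ^ 2)
      atTop (nhds 0) := by
  obtain ⟨L, hL⟩ := hconv
  have hmul : Tendsto (fun v : ℝ => c * v) atTop atTop :=
    Tendsto.const_mul_atTop hc tendsto_id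
  have h2 := (hL.comp hmul).sub hL
  rw [sub_self] at h2
  apply h2.congr'
  filter_upwards [eventually_ge_atTop (1:ℝ)] with v hv
  have hv0 : 0 < v := by linarith
  exact intervalIntegral.integral_interval_sub_left
    (integrand_ii one_pos (by positivity)) (integrand_ii one_pos hv0)

/-- If the improper integral `∫₁^∞ (ψ(v) - v)/v² dv` converges, then `ψ(v) ~ v`. -/
theorem stmt_11
    (hconv : ∃ L : ℝ, Tendsto
      (fun T : ℝ => ∫ v in (1 : ℝ)..T, (chebyshevPsi v - v) / v ^ 2)
      atTop (nhds L)) :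
    Tendsto (fun v : ℝ => chebyshevPsi v / v) atTop (nhds 1) := by
  have claimA : ∀ c : ℝ, 1 < c → ∀ᶠ v in atTop, chebyshevPsi v < c * v := by
    intro c hc
    by_contra hcon
    have hfreq : ∃ᶠ v in atTop, c * v ≤ chebyshevPsi v := by
      rw [Filter.not_eventually] at hcon; simpa [not_lt, frequently_atTop] using hcon
    have hδ : 0 < c - 1 - Real.log c := by
      have := Real.log_lt_sub_one_of_pos (by linarith) (by linarith : c ≠ 1)
      linarith
    have hw := window (by linarith : (0:ℝ) < c) hconv
    have hev := (hw.eventually_lt_const hδ).and (eventually_ge_atTop (1:ℝ))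
    obtain ⟨v, hv1, hv2, hv3⟩ := (hfreq.and_eventually hev).exists
    exact absurd (upper_est hc hv3 hv1) (not_le.2 hv2)
  have claimB : ∀ c : ℝ, 0 < c → c < 1 → ∀ᶠ v in atTop, c * v < chebyshevPsi v := by
    intro c hc0 hc1
    by_contra hcon
    have hfreq : ∃ᶠ v in atTop, chebyshevPsi v ≤ c * v := by
      rw [Filter.not_eventually] at hcon; simpa [not_lt, frequently_atTop] using hcon
    have hδ : 0 < c - 1 - Real.log c := by
      have := Real.log_lt_sub_one_of_pos hc0 (by linarith : c ≠ 1)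
      linarith
    have hw := window hc0 hconv
    have hev := (hw.eventually_lt_const hδ).and (eventually_ge_atTop (1:ℝ))
    obtain ⟨v, hv1, hv2, hv3⟩ := (hfreq.and_eventually hev).exists
    exact absurd (lower_est hc0 hc1 hv3 hv1) (not_le.2 hv2)
  rw [Metric.tendsto_nhds]
  intro ε hε
  set ε' : ℝ := min ε (1/2) with hε'
  have hε'0 : 0 < ε' := lt_min hε (by norm_num)
  have hε'le : ε' ≤ ε := min_le_left _ _
  have hε'half : ε' ≤ 1/2 := min_le_right _ _
  filter_upwards [claimA (1 + ε') (by linarith), claimB (1 - ε') (by linarith) (by linarith),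
    eventually_ge_atTop (1:ℝ)] with v hA hB hv
  have hv0 : 0 < v := by linarith
  rw [Real.dist_eq, abs_lt]
  constructor
  · have h1 : 1 - ε' < chebyshevPsi v / v := (lt_div_iff₀ hv0).2 (by linarith)
    linarith
  · have h2 : chebyshevPsi v / v < 1 + ε' := (div_lt_iff₀ hv0).2 (by linarith)
    linarith
end

section
/- Let b : ℝ → ℂ be bounded, measurable, and tending to 0 at ±∞, and let φ be a Schwartz function. Then ∫_ℝ b(t) φ̂(t - T) dt → 0 as T → ±∞. -/
open MeasureTheory Complex Filter

open scoped FourierTransform Real in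
/-- Riemann–Lebesgue lemma for pseudofunctions: if `b` is bounded, measurable
and tends to `0` at `±∞`, and `φ` is Schwartz, then
`∫ b(t) φ̂(t-T) dt → 0` as `T → ±∞`. -/
theorem stmt_15 (b : ℝ → ℂ) (M : ℝ) (hb : Measurable b)
    (hbd : ∀ t : ℝ, ‖b t‖ ≤ M)
    (htop : Tendsto b atTop (nhds 0)) (hbot : Tendsto b atBot (nhds 0))
    (φ : SchwartzMap ℝ ℂ) :
    Tendsto (fun T : ℝ =>
        ∫ t : ℝ, b t * ∫ y : ℝ, φ y * Complex.exp (-Complex.I * y * (t - T)))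
      atTop (nhds 0) ∧
    Tendsto (fun T : ℝ =>
        ∫ t : ℝ, b t * ∫ y : ℝ, φ y * Complex.exp (-Complex.I * y * (t - T)))
      atBot (nhds 0) := by
  set ψ : ℝ → ℂ := fun s => 𝓕 ⇑φ (s / (2 * π)) with hψ
  have hπ : (2 * π) ≠ 0 := by positivity
  have hψeq : ∀ s : ℝ, (∫ y : ℝ, φ y * Complex.exp (-Complex.I * y * s)) = ψ s := by
    intro s
    show _ = 𝓕 ⇑φ (s / (2 * π))
    rw [Real.fourier_real_eq_integral_exp_smul]
    congr 1
    ext y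
    rw [smul_eq_mul, mul_comm]
    congr 2
    have : -2 * π * y * (s / (2 * π)) = -(y * s) := by field_simp
    rw [this]
    push_cast
    ring
  have hψint : Integrable ψ := by
    have h1 : Integrable (⇑(SchwartzMap.fourierTransformCLM ℂ φ)) :=
      (SchwartzMap.fourierTransformCLM ℂ φ).integrable
    rw [SchwartzMap.fourierTransformCLM_apply] at h1
    exact (MeasureTheory.integrable_comp_div_iff (𝓕 ⇑φ) hπ).2 h1
  have hψcont : Continuous ψ := by
    have h1 : Continuous (⇑(SchwartzMap.fourierTransformCLM ℂ φ)) :=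
      (SchwartzMap.fourierTransformCLM ℂ φ).continuous
    rw [SchwartzMap.fourierTransformCLM_apply] at h1
    exact h1.comp (continuous_id.div_const _)
  have hM : 0 ≤ M := le_trans (norm_nonneg _) (hbd 0)
  have key : ∀ (l : Filter ℝ) [l.IsCountablyGenerated],
      Tendsto b l (nhds 0) → (∀ u : ℝ, Tendsto (fun T => u + T) l l) →
      Tendsto (fun T : ℝ =>
        ∫ t : ℝ, b t * ∫ y : ℝ, φ y * Complex.exp (-Complex.I * y * (t - T)))
      l (nhds 0) := by
    intro l _ hl hshift
    have heq : (fun T : ℝ =>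
        ∫ t : ℝ, b t * ∫ y : ℝ, φ y * Complex.exp (-Complex.I * y * (t - T)))
        = fun T : ℝ => ∫ u : ℝ, b (u + T) * ψ u := by
      funext T
      simp_rw [← Complex.ofReal_sub, hψeq]
      rw [← integral_add_right_eq_self (fun x => b x * ψ (x - T)) T]
      simp
    rw [heq, show (0:ℂ) = ∫ (_ : ℝ), (0:ℂ) by simp]
    apply tendsto_integral_filter_of_dominated_convergence (fun u => M * ‖ψ u‖)
    · filter_upwards with T
      exact ((hb.comp (measurable_add_const T)).aestronglyMeasurable.mul
        hψcont.aestronglyMeasurable)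
    · filter_upwards with T
      filter_upwards with u
      rw [norm_mul]
      exact mul_le_mul_of_nonneg_right (hbd _) (norm_nonneg _)
    · exact hψint.norm.const_mul M
    · filter_upwards with u
      have : Tendsto (fun T => b (u + T)) l (nhds 0) := hl.comp (hshift u)
      simpa using this.mul_const (ψ u)
  constructor
  · exact key atTop htop (fun u => tendsto_atTop_add_const_left atTop u tendsto_id)
  · exact key atBot hbot (fun u => tendsto_atBot_add_const_left atBot u tendsto_id)
end
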